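/- Let N ≥ 1 be a natural number, let T : ℝ^N → ℝ^N be the cyclic coordinate permutation T(x)_i = x_{i+1 mod N}, let w = exp(2πi/N), let s₁ : ℝ^N → ℂ be infinitely differentiable (C^∞), set s_j = s₁ ∘ T^{j-1} for j = 1,…,N, and assume Σ_{j=1}^N |s_j(x)|² = 1 for every x ∈ ℝ^N. For j ∈ {1,…,N} define (P_j f)(x) = conj(s_j(x)) · Σ_{τ=0}^{N-1} conj(w^{τ j}) · s_j(T^τ x) · f(T^τ x). Then P_j is idempotent on L²(ℝ^N): for every f ∈ L²(ℝ^N), P_j(P_j f) = P_j f almost everywhere. -/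

import Mathlib

open MeasureTheory Complex

/-- The cyclic coordinate permutation `T` on `ℝ^N`, `T(x)_i = x_{i+1 mod N}`. -/
noncomputable def cyc (N : ℕ) [NeZero N] : (Fin N → ℝ) → (Fin N → ℝ) :=
  fun x i => x (i + 1)

/-- The `N`-th root of unity `w = exp(2πi/N)`. -/
noncomputable def rootN (N : ℕ) : ℂ := Complex.exp (2 * Real.pi * Complex.I / N)

/-- The operator `(P_j f)(x) = conj(s_j(x)) · Σ_{τ=0}^{N-1} conj(w^{τj}) s_j(T^τ x) f(T^τ x)`. -/
noncomputable def Pop (N : ℕ) [NeZero N] (s : ℕ → (Fin N → ℝ) → ℂ) (j : ℕ)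
    (f : (Fin N → ℝ) → ℂ) : (Fin N → ℝ) → ℂ :=
  fun x => (starRingEnd ℂ) (s j x) *
    ∑ τ ∈ Finset.range N,
      (starRingEnd ℂ) ((rootN N) ^ (τ * j)) * s j ((cyc N)^[τ] x) * f ((cyc N)^[τ] x)

open Fin.NatCast in
lemma cyc_iter (N : ℕ) [NeZero N] (k : ℕ) (x : Fin N → ℝ) (i : Fin N) :
    (cyc N)^[k] x i = x (i + (k : Fin N)) := by
  induction k generalizing x i with
  | zero => simp
  | succ k ih =>
    rw [Function.iterate_succ_apply, ih, cyc]
    congr 1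
    rw [Nat.cast_succ]
    abel

open Fin.NatCast in
lemma cyc_iter_N (N : ℕ) [NeZero N] (x : Fin N → ℝ) : (cyc N)^[N] x = x := by
  funext i
  rw [cyc_iter]
  simp

lemma cyc_period (N : ℕ) [NeZero N] (τ : ℕ) (x : Fin N → ℝ) :
    (cyc N)^[τ + N] x = (cyc N)^[τ] x := by
  rw [Function.iterate_add_apply, cyc_iter_N]

lemma rootN_abs (N : ℕ) : ‖rootN N‖ = 1 := by
  rw [rootN, Complex.norm_exp]
  have : (2 * (Real.pi : ℂ) * Complex.I / (N : ℂ)).re = 0 := by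
    simp [Complex.div_re]
  rw [this, Real.exp_zero]

lemma rootN_pow_N (N : ℕ) [NeZero N] : rootN N ^ N = 1 := by
  rw [rootN, ← Complex.exp_nat_mul]
  have hN : (N : ℂ) ≠ 0 := Nat.cast_ne_zero.mpr (NeZero.ne N)
  have : (N : ℂ) * (2 * (Real.pi : ℂ) * Complex.I / (N : ℂ)) = 2 * (Real.pi : ℂ) * Complex.I := by
    field_simp
  rw [this, Complex.exp_two_pi_mul_I]

lemma conj_rootN_pow_mul (N : ℕ) (k : ℕ) :
    (starRingEnd ℂ) (rootN N ^ k) * rootN N ^ k = 1 := by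
  rw [mul_comm, Complex.mul_conj, ← Complex.sq_norm, norm_pow, rootN_abs, one_pow]
  norm_num

lemma sum_range_shift {M : Type*} [AddCancelCommMonoid M] (N : ℕ) (g : ℕ → M)
    (hg : ∀ n, g (n + N) = g n) (τ : ℕ) :
    ∑ i ∈ Finset.range N, g (i + τ) = ∑ i ∈ Finset.range N, g i := by
  induction τ with
  | zero => simp
  | succ τ ih =>
    have hre : ∑ i ∈ Finset.range N, g (i + (τ + 1)) =
        ∑ i ∈ Finset.range N, g ((i + 1) + τ) := by
      apply Finset.sum_congr rfl
      intro i _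
      congr 1
      omega
    have h1 := Finset.sum_range_succ' (fun i => g (i + τ)) N
    have h2 := Finset.sum_range_succ (fun i => g (i + τ)) N
    have hNτ : g (N + τ) = g (0 + τ) := by rw [zero_add, add_comm, hg]
    have hkey : (∑ i ∈ Finset.range N, g ((i + 1) + τ)) + g (0 + τ) =
        (∑ i ∈ Finset.range N, g (i + τ)) + g (0 + τ) := by
      rw [← h1, h2, hNτ]
    have := add_right_cancel hkey
    rw [hre, this, ih]

/-- `P_j` is idempotent on `L²(ℝ^N)`: `P_j (P_j f) = P_j f` a.e. -/
theorem stmt1 (N : ℕ) [NeZero N]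
    (s₁ : (Fin N → ℝ) → ℂ) (hs₁ : ContDiff ℝ (⊤ : ℕ∞) s₁)
    (s : ℕ → (Fin N → ℝ) → ℂ)
    (hsdef : ∀ j, 1 ≤ j → s j = s₁ ∘ (cyc N)^[j - 1])
    (hsum : ∀ x, ∑ j ∈ Finset.Icc 1 N, ‖s j x‖ ^ 2 = 1)
    (j : ℕ) (hj : j ∈ Finset.Icc 1 N) :
    ∀ f : (Fin N → ℝ) → ℂ, MemLp f 2 volume →
      Pop N s j (Pop N s j f) =ᵐ[volume] Pop N s j f := by
  obtain ⟨hj1, hjN⟩ := Finset.mem_Icc.mp hj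
  intro f _hf
  apply Filter.Eventually.of_forall
  intro x
  set w := rootN N with hw
  have hs1 : ∀ y, s j y = s₁ ((cyc N)^[j-1] y) := fun y => by
    rw [hsdef j hj1]; rfl
  have hwNj : w ^ (N * j) = 1 := by rw [pow_mul, rootN_pow_N, one_pow]
  have hgper : ∀ ρ, w ^ ((ρ + N) * j) = w ^ (ρ * j) := by
    intro ρ; rw [add_mul, pow_add, hwNj, mul_one]
  -- the sum of |s_j(T^τ x)|² over τ < N equals 1
  have habs_sum : ∑ τ ∈ Finset.range N, ‖s j ((cyc N)^[τ] x)‖ ^ 2 = 1 := by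
    have hterm : ∀ τ, ‖s j ((cyc N)^[τ] x)‖ ^ 2 =
        ‖s₁ ((cyc N)^[τ + (j-1)] x)‖ ^ 2 := by
      intro τ
      rw [hs1, add_comm τ (j-1), Function.iterate_add_apply]
    calc ∑ τ ∈ Finset.range N, ‖s j ((cyc N)^[τ] x)‖ ^ 2
        = ∑ τ ∈ Finset.range N, ‖s₁ ((cyc N)^[τ + (j-1)] x)‖ ^ 2 :=
          Finset.sum_congr rfl (fun τ _ => hterm τ)
      _ = ∑ m ∈ Finset.range N, ‖s₁ ((cyc N)^[m] x)‖ ^ 2 :=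
          sum_range_shift N (fun m => ‖s₁ ((cyc N)^[m] x)‖ ^ 2)
            (fun n => by simp only [cyc_period]) (j - 1)
      _ = ∑ k ∈ Finset.Icc 1 N, ‖s k x‖ ^ 2 := by
          apply Finset.sum_nbij' (fun m => m + 1) (fun k => k - 1)
          · intro a ha
            simp only [Finset.mem_range] at ha
            simp only [Finset.mem_Icc]
            omega
          · intro a ha
            simp only [Finset.mem_Icc] at ha
            simp only [Finset.mem_range]
            omega
          · intro a _; omega
          · intro a ha
            simp only [Finset.mem_Icc] at ha
            omega
          · intro m _
            rw [hsdef (m + 1) (by omega)]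
            simp only [Function.comp_apply, Nat.add_sub_cancel]
      _ = 1 := hsum x
  -- the inner sum function and its periodicity
  set g : ℕ → ℂ := fun ρ =>
    (starRingEnd ℂ) (w ^ (ρ * j)) * s j ((cyc N)^[ρ] x) * f ((cyc N)^[ρ] x) with hg
  have hgp : ∀ ρ, g (ρ + N) = g ρ := by
    intro ρ
    simp only [hg, hgper, cyc_period]
  set S : ℂ := ∑ ρ ∈ Finset.range N, g ρ with hS
  -- P_j f at (cyc N)^[τ] x
  have hPop : ∀ τ, Pop N s j f ((cyc N)^[τ] x) =
      (starRingEnd ℂ) (s j ((cyc N)^[τ] x)) * (w ^ (τ * j) * S) := by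
    intro τ
    have hc : ∀ σ, (starRingEnd ℂ) (w ^ (σ * j)) =
        w ^ (τ * j) * (starRingEnd ℂ) (w ^ ((σ + τ) * j)) := by
      intro σ
      have h1 := conj_rootN_pow_mul N (τ * j)
      calc (starRingEnd ℂ) (w ^ (σ * j))
          = (starRingEnd ℂ) (w ^ (σ * j)) *
            ((starRingEnd ℂ) (w ^ (τ * j)) * w ^ (τ * j)) := by rw [h1, mul_one]
        _ = w ^ (τ * j) * (starRingEnd ℂ) (w ^ ((σ + τ) * j)) := by
            rw [add_mul, pow_add, map_mul]; ring
    unfold Pop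
    congr 1
    calc ∑ σ ∈ Finset.range N,
          (starRingEnd ℂ) (w ^ (σ * j)) * s j ((cyc N)^[σ] ((cyc N)^[τ] x)) * f ((cyc N)^[σ] ((cyc N)^[τ] x))
        = ∑ σ ∈ Finset.range N, w ^ (τ * j) * g (σ + τ) := by
          apply Finset.sum_congr rfl
          intro σ _
          rw [hc σ, ← Function.iterate_add_apply]
          simp only [hg]
          ring
      _ = w ^ (τ * j) * ∑ σ ∈ Finset.range N, g (σ + τ) := by rw [Finset.mul_sum]
      _ = w ^ (τ * j) * S := by rw [sum_range_shift N g hgp τ]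
  -- the main computation
  have hPf : Pop N s j f x = (starRingEnd ℂ) (s j x) * S := rfl
  show Pop N s j (Pop N s j f) x = Pop N s j f x
  rw [hPf]
  unfold Pop
  congr 1
  calc ∑ τ ∈ Finset.range N,
        (starRingEnd ℂ) (w ^ (τ * j)) * s j ((cyc N)^[τ] x) * Pop N s j f ((cyc N)^[τ] x)
      = ∑ τ ∈ Finset.range N,
          ((‖s j ((cyc N)^[τ] x)‖ ^ 2 : ℝ) : ℂ) * S := by
        apply Finset.sum_congr rfl
        intro τ _
        rw [hPop τ]
        have h1 := conj_rootN_pow_mul N (τ * j)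
        have h2 : s j ((cyc N)^[τ] x) * (starRingEnd ℂ) (s j ((cyc N)^[τ] x)) =
            ((‖s j ((cyc N)^[τ] x)‖ ^ 2 : ℝ) : ℂ) := by
          rw [Complex.mul_conj, ← Complex.sq_norm]
        calc (starRingEnd ℂ) (w ^ (τ * j)) * s j ((cyc N)^[τ] x) *
              ((starRingEnd ℂ) (s j ((cyc N)^[τ] x)) * (w ^ (τ * j) * S))
            = ((starRingEnd ℂ) (w ^ (τ * j)) * w ^ (τ * j)) *
              (s j ((cyc N)^[τ] x) * (starRingEnd ℂ) (s j ((cyc N)^[τ] x))) * S := by ring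
          _ = ((‖s j ((cyc N)^[τ] x)‖ ^ 2 : ℝ) : ℂ) * S := by
              rw [h1, h2, one_mul]
    _ = (((∑ τ ∈ Finset.range N, ‖s j ((cyc N)^[τ] x)‖ ^ 2 : ℝ)) : ℂ) * S := by
        rw [← Finset.sum_mul]
        push_cast
        ring
    _ = S := by rw [habs_sum]; norm_num
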